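/- Let S be a Cu-semigroup approximated by a family (S_λ, φ_λ). If each S_λ satisfies axiom (O5), then so does S. -/
import Mathlib


def WayBelow {S : Type*} [PartialOrder S] (x y : S) : Prop :=
  ∀ f : ℕ → S, Monotone f → ∀ z : S, IsLUB (Set.range f) z → y ≤ z → ∃ n, x ≤ f n

class CuSemigroup (S : Type*) [AddCommMonoid S] [PartialOrder S] : Prop where
  zero_le : ∀ x : S, 0 ≤ x
  add_le_add_left : ∀ x y : S, x ≤ y → ∀ z : S, z + x ≤ z + y
  exists_sup : ∀ f : ℕ → S, Monotone f → ∃ z : S, IsLUB (Set.range f) z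
  exists_wb_seq : ∀ x : S, ∃ f : ℕ → S, (∀ n, WayBelow (f n) (f (n + 1))) ∧ IsLUB (Set.range f) x
  wb_add : ∀ x' x y' y : S, WayBelow x' x → WayBelow y' y → WayBelow (x' + y') (x + y)
  sup_add : ∀ f g : ℕ → S, Monotone f → Monotone g → ∀ a b : S,
    IsLUB (Set.range f) a → IsLUB (Set.range g) b →
    IsLUB (Set.range fun n => f n + g n) (a + b)

def IsCuMorphism {T S : Type*} [AddCommMonoid T] [PartialOrder T] [AddCommMonoid S]
    [PartialOrder S] (φ : T → S) : Prop :=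
  φ 0 = 0 ∧ (∀ x y : T, φ (x + y) = φ x + φ y) ∧ Monotone φ ∧
  (∀ f : ℕ → T, Monotone f → ∀ z : T, IsLUB (Set.range f) z →
    IsLUB (Set.range fun n => φ (f n)) (φ z)) ∧
  (∀ x y : T, WayBelow x y → WayBelow (φ x) (φ y))

def Approximates {S : Type*} [AddCommMonoid S] [PartialOrder S] {ι : Type*}
    (Sl : ι → Type*) [∀ i, AddCommMonoid (Sl i)] [∀ i, PartialOrder (Sl i)]
    (φ : ∀ i, Sl i → S) : Prop :=
  ∀ (p q : ℕ) (x' x : Fin p → S) (m n : Fin q → Fin p → ℕ),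
    (∀ j, WayBelow (x' j) (x j)) →
    (∀ k, WayBelow (∑ j, m k j • x j) (∑ j, n k j • x' j)) →
    ∃ i, ∃ y : Fin p → Sl i,
      (∀ j, WayBelow (x' j) (φ i (y j)) ∧ WayBelow (φ i (y j)) (x j)) ∧
      ∀ k, WayBelow (∑ j, m k j • y j) (∑ j, n k j • y j)

def O5 (S : Type*) [AddCommMonoid S] [PartialOrder S] : Prop :=
  ∀ x' x y' y z : S, x + y ≤ z → WayBelow x' x → WayBelow y' y →
    ∃ c : S, x' + c ≤ z ∧ z ≤ x + c ∧ WayBelow y' c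

section Helpers

lemma exists_seq {α : Type*} (P : ℕ → α → Prop) (Q : ℕ → α → α → Prop)
    (h0 : ∃ a, P 0 a)
    (hstep : ∀ n a, P n a → ∃ b, P (n+1) b ∧ Q n a b) :
    ∃ g : ℕ → α, (∀ n, P n (g n)) ∧ ∀ n, Q n (g n) (g (n+1)) := by
  choose f hf hq using hstep
  obtain ⟨a0, ha0⟩ := h0
  let F : ∀ n, {a // P n a} := fun n =>
    Nat.rec ⟨a0, ha0⟩ (fun n p => ⟨f n p.1 p.2, hf n p.1 p.2⟩) n
  exact ⟨fun n => (F n).1, fun n => (F n).2, fun n => hq n (F n).1 (F n).2⟩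

variable {S : Type*} [AddCommMonoid S] [PartialOrder S]

lemma wayBelow_le {x y : S} (h : WayBelow x y) : x ≤ y := by
  obtain ⟨n, hn⟩ := h (fun _ => y) monotone_const y (by simp [Set.range_const]) le_rfl
  exact hn

lemma le_wayBelow {x y z : S} (h : x ≤ y) (h2 : WayBelow y z) : WayBelow x z :=
  fun f hf s hs hzs => (h2 f hf s hs hzs).imp fun _ hn => h.trans hn

lemma wayBelow_trans_le {x y z : S} (h : WayBelow x y) (h2 : y ≤ z) : WayBelow x z :=
  fun f hf s hs hzs => h f hf s hs (h2.trans hzs)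

lemma wayBelow_zero [CuSemigroup S] (a : S) : WayBelow (0:S) a :=
  fun f _ _ _ _ => ⟨0, CuSemigroup.zero_le _⟩

lemma addLeAdd [CuSemigroup S] {a b c d : S} (h1 : a ≤ b) (h2 : c ≤ d) : a + c ≤ b + d :=
  le_trans (CuSemigroup.add_le_add_left c d h2 a)
    (by rw [add_comm a d, add_comm b d]; exact CuSemigroup.add_le_add_left a b h1 d)

lemma isLUB_const_add [CuSemigroup S] {f : ℕ → S} (hf : Monotone f) {s : S}
    (hs : IsLUB (Set.range f) s) (a : S) :
    IsLUB (Set.range fun n => a + f n) (a + s) :=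
  CuSemigroup.sup_add (fun _ => a) f monotone_const hf a s (by simp [Set.range_const]) hs

lemma wayBelow_interp [CuSemigroup S] {x y : S} (h : WayBelow x y) :
    ∃ w, WayBelow x w ∧ WayBelow w y := by
  obtain ⟨f, hwb, hlub⟩ := CuSemigroup.exists_wb_seq y
  have hm : Monotone f := monotone_nat_of_le_succ fun n => wayBelow_le (hwb n)
  obtain ⟨n, hn⟩ := h f hm y hlub le_rfl
  exact ⟨f (n+1), le_wayBelow hn (hwb n),
    wayBelow_trans_le (hwb (n+1)) (hlub.1 ⟨n+2, rfl⟩)⟩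

lemma exists_wb_below {T : Type*} [AddCommMonoid T] [PartialOrder T] [CuSemigroup T]
    {φ : T → S} (hφ : IsCuMorphism φ) {x : S} {d : T} (h : WayBelow x (φ d)) :
    ∃ d', WayBelow d' d ∧ x ≤ φ d' := by
  obtain ⟨v, hv, hlub⟩ := CuSemigroup.exists_wb_seq d
  have hm : Monotone v := monotone_nat_of_le_succ fun n => wayBelow_le (hv n)
  obtain ⟨j, hj⟩ := h (fun n => φ (v n)) (fun i j hij => hφ.2.2.1 (hm hij)) (φ d)
    (hφ.2.2.2.1 v hm d hlub) le_rfl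
  exact ⟨v j, wayBelow_trans_le (hv j) (hlub.1 ⟨j+1, rfl⟩), hj⟩

lemma step_core [CuSemigroup S] {T : Type*} [AddCommMonoid T] [PartialOrder T] [CuSemigroup T]
    (hO5T : O5 T) {φ : T → S} (hφ : IsCuMorphism φ) {a b w : T} {ξ σ : S}
    (hξ : WayBelow ξ (φ a)) (hσ : WayBelow σ (φ b)) (hab : WayBelow (a + b) w) :
    ∃ c : T, ξ + φ c ≤ φ w ∧ φ w ≤ φ a + φ c ∧ WayBelow σ (φ c) := by
  obtain ⟨a', ha', hξa'⟩ := exists_wb_below hφ hξ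
  obtain ⟨b', hb', hσb'⟩ := exists_wb_below hφ hσ
  obtain ⟨c, h1, h2, h3⟩ := hO5T a' a b' b w (wayBelow_le hab) ha' hb'
  refine ⟨c, ?_, ?_, le_wayBelow hσb' (hφ.2.2.2.2 b' c h3)⟩
  · calc ξ + φ c ≤ φ a' + φ c := addLeAdd hξa' le_rfl
      _ = φ (a' + c) := (hφ.2.1 a' c).symm
      _ ≤ φ w := hφ.2.2.1 h1
  · calc φ w ≤ φ (a + c) := hφ.2.2.1 h2
      _ = φ a + φ c := hφ.2.1 a c

lemma choose_triple [CuSemigroup S] (x : S) {e σ ρ : S}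
    (hσ : WayBelow σ e) (hρ : WayBelow ρ (x + e)) :
    ∃ t' t ts : S, σ ≤ t' ∧ ρ ≤ x + t' ∧ WayBelow t' t ∧ WayBelow t ts ∧ ts ≤ e := by
  obtain ⟨u, hu, hlub⟩ := CuSemigroup.exists_wb_seq e
  have hm : Monotone u := monotone_nat_of_le_succ fun n => wayBelow_le (hu n)
  obtain ⟨m₁, h₁⟩ := hσ u hm e hlub le_rfl
  obtain ⟨m₂, h₂⟩ := hρ (fun n => x + u n) (fun i j hij => addLeAdd le_rfl (hm hij)) (x + e)
    (isLUB_const_add hm hlub x) le_rfl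
  exact ⟨u (max m₁ m₂), u (max m₁ m₂ + 1), u (max m₁ m₂ + 2),
    h₁.trans (hm (le_max_left _ _)), h₂.trans (addLeAdd le_rfl (hm (le_max_right _ _))),
    hu _, hu _, hlub.1 ⟨_, rfl⟩⟩

end Helpers
theorem approximates_O5 {S : Type*} [AddCommMonoid S] [PartialOrder S]
    [CuSemigroup S] {ι : Type*} (Sl : ι → Type*) [∀ i, AddCommMonoid (Sl i)]
    [∀ i, PartialOrder (Sl i)] [∀ i, CuSemigroup (Sl i)]
    (φ : ∀ i, Sl i → S) (hφ : ∀ i, IsCuMorphism (φ i))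
    (happrox : Approximates Sl φ)
    (hO5 : ∀ i, O5 (Sl i)) :
    O5 S := by
  intro x' x y' y z hxyz hx hy
  obtain ⟨y₂, hy'2, hy2⟩ := wayBelow_interp hy
  obtain ⟨y₁, hy'1, hy12⟩ := wayBelow_interp hy'2
  -- descending chain of interpolants between x' and x
  obtain ⟨χ, hχ, hχs⟩ := exists_seq (fun _ a => WayBelow x' a ∧ WayBelow a x)
    (fun _ a b => WayBelow b a) (wayBelow_interp hx)
    (fun n a ha => by
      obtain ⟨b, hb1, hb2⟩ := wayBelow_interp ha.1
      exact ⟨b, ⟨hb1, wayBelow_trans_le hb2 (wayBelow_le ha.2)⟩, hb2⟩)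
  obtain ⟨ζ, hζ, hζlub⟩ := CuSemigroup.exists_wb_seq z
  have hζm : Monotone ζ := monotone_nat_of_le_succ fun n => wayBelow_le (hζ n)
  have hrel0 : WayBelow (χ 0 + y₂) (x + y) := CuSemigroup.wb_add _ _ _ _ (hχ 0).2 hy2
  obtain ⟨M, hM⟩ := hrel0 ζ hζm z hζlub hxyz
  set zs : ℕ → S := fun n => ζ (M + 1 + n) with hzsdef
  have hzss : ∀ n, WayBelow (zs n) (zs (n+1)) := fun n => hζ (M + 1 + n)
  have hzsle : ∀ n, zs n ≤ z := fun n => hζlub.1 ⟨M + 1 + n, rfl⟩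
  have hM0 : WayBelow (χ 0 + y₂) (zs 0) := le_wayBelow hM (hζ M)
  -- the recursive construction
  obtain ⟨g, hP, hQ⟩ := exists_seq
    (fun n (r : S × S × S) => WayBelow r.1 r.2.1 ∧ WayBelow r.2.1 r.2.2 ∧
      WayBelow (χ (n+1) + r.2.2) (zs (n+1)) ∧ x' + r.1 ≤ z ∧ (n = 0 → y₁ ≤ r.1))
    (fun n r r' => r.1 ≤ r'.1 ∧ zs n ≤ x + r'.1)
    (by -- base step
      obtain ⟨i, yv, hyv, hrl⟩ := happrox 3 1 ![χ 1, y₁, zs 0] ![χ 0, y₂, zs 1]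
        (fun _ => ![1,1,0]) (fun _ => ![0,0,1])
        (by
          intro j
          fin_cases j
          · exact hχs 0
          · exact hy12
          · exact hzss 0)
        (by
          intro k
          simpa [Fin.sum_univ_three] using hM0)
      have hab : WayBelow (yv 0 + yv 1) (yv 2) := by
        simpa [Fin.sum_univ_three] using hrl 0
      obtain ⟨c, hc1, hc2, hc3⟩ := step_core (hO5 i) (hφ i) (hyv 0).1 (hyv 1).1 hab
      obtain ⟨t', t, ts, hσt, _, htt, htts, htse⟩ :=
        choose_triple x hc3 (wayBelow_zero (x + φ i c))
      have ht'e : t' ≤ φ i c :=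
        (wayBelow_le htt).trans ((wayBelow_le htts).trans htse)
      refine ⟨(t', t, ts), htt, htts, ?_, ?_, fun _ => hσt⟩
      · exact le_wayBelow (le_trans (addLeAdd le_rfl htse) hc1) (hyv 2).2
      · calc x' + t' ≤ χ 1 + φ i c := addLeAdd (wayBelow_le (hχ 1).1) ht'e
          _ ≤ φ i (yv 2) := hc1
          _ ≤ zs 1 := wayBelow_le (hyv 2).2
          _ ≤ z := hzsle 1)
    (by -- inductive step
      rintro n ⟨t', t, ts⟩ ⟨h1, h2, h3, h4, -⟩
      obtain ⟨i, yv, hyv, hrl⟩ := happrox 3 1 ![χ (n+2), t, zs (n+1)]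
        ![χ (n+1), ts, zs (n+2)]
        (fun _ => ![1,1,0]) (fun _ => ![0,0,1])
        (by
          intro j
          fin_cases j
          · exact hχs (n+1)
          · exact h2
          · exact hzss (n+1))
        (by
          intro k
          simpa [Fin.sum_univ_three] using h3)
      have hab : WayBelow (yv 0 + yv 1) (yv 2) := by
        simpa [Fin.sum_univ_three] using hrl 0
      have hσ : WayBelow t' (φ i (yv 1)) := wayBelow_trans_le h1 (wayBelow_le (hyv 1).1)
      obtain ⟨c, hc1, hc2, hc3⟩ := step_core (hO5 i) (hφ i) (hyv 0).1 hσ hab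
      have hρ : WayBelow (zs n) (x + φ i c) := by
        refine wayBelow_trans_le (hzss n) ?_
        calc zs (n+1) ≤ φ i (yv 2) := wayBelow_le (hyv 2).1
          _ ≤ φ i (yv 0) + φ i c := hc2
          _ ≤ χ (n+1) + φ i c := addLeAdd (wayBelow_le (hyv 0).2) le_rfl
          _ ≤ x + φ i c := addLeAdd (wayBelow_le (hχ (n+1)).2) le_rfl
      obtain ⟨nt', nt, nts, ht'old, hzx, htt, htts, htse⟩ := choose_triple x hc3 hρ
      have hnt'e : nt' ≤ φ i c :=
        (wayBelow_le htt).trans ((wayBelow_le htts).trans htse)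
      refine ⟨(nt', nt, nts), ⟨htt, htts, ?_, ?_, fun h => absurd h n.succ_ne_zero⟩,
        ht'old, hzx⟩
      · exact le_wayBelow (le_trans (addLeAdd le_rfl htse) hc1) (hyv 2).2
      · calc x' + nt' ≤ χ (n+2) + φ i c := addLeAdd (wayBelow_le (hχ (n+2)).1) hnt'e
          _ ≤ φ i (yv 2) := hc1
          _ ≤ zs (n+2) := wayBelow_le (hyv 2).2
          _ ≤ z := hzsle (n+2))
  -- assemble the element c as the supremum of the monotone sequence n ↦ (g n).1
  have hmono : Monotone (fun n => (g n).1) := monotone_nat_of_le_succ fun n => (hQ n).1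
  obtain ⟨c, hc⟩ := CuSemigroup.exists_sup (fun n => (g n).1) hmono
  refine ⟨c, ?_, ?_, ?_⟩
  · -- x' + c ≤ z
    have hlub : IsLUB (Set.range fun n => x' + (g n).1) (x' + c) :=
      isLUB_const_add hmono hc x'
    refine hlub.2 ?_
    rintro _ ⟨n, rfl⟩
    exact (hP n).2.2.2.1
  · -- z ≤ x + c
    refine hζlub.2 ?_
    rintro _ ⟨k, rfl⟩
    calc ζ k ≤ ζ (M + 1 + k) := hζm (by omega)
      _ ≤ x + (g (k+1)).1 := (hQ k).2
      _ ≤ x + c := addLeAdd le_rfl (hc.1 ⟨k+1, rfl⟩)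
  · -- WayBelow y' c
    exact wayBelow_trans_le hy'1 (le_trans ((hP 0).2.2.2.2 rfl) (hc.1 ⟨0, rfl⟩))
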